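/- If ⟨e,f,g⟩ is an AvN triple in the Pauli n-group, then there exist three distinct indices i1, i2, i3 such that e_{i1} = f_{i1} ≠ g_{i1}, e_{i2} ≠ f_{i2} = g_{i2}, and e_{i3} = g_{i3} ≠ f_{i3} (all entries at these indices distinct from I), and the restriction of e, f, g to the coordinates {i1, i2, i3} is an AvN triple in P_3. -/

import Mathlib

/-- Pauli labels. -/
inductive PLbl : Type
  | I | X | Y | Z
deriving DecidableEq

instance : Fintype PLbl := ⟨{PLbl.I, PLbl.X, PLbl.Y, PLbl.Z}, fun x => by cases x <;> simp⟩

open PLbl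

/-- Multiplication of Pauli labels, discarding the phase. -/
def lmul : PLbl → PLbl → PLbl
  | I, p => p
  | p, I => p
  | X, X => I
  | Y, Y => I
  | Z, Z => I
  | X, Y => Z
  | Y, X => Z
  | Y, Z => X
  | Z, Y => X
  | Z, X => Y
  | X, Z => Y

/-- Phase (as a power of i, in ℤ₄) arising from multiplying two Pauli labels:
XY = iZ, YZ = iX, ZX = iY, YX = -iZ, ZY = -iX, XZ = -iY. -/
def lphase : PLbl → PLbl → ZMod 4
  | X, Y => 1
  | Y, Z => 1
  | Z, X => 1
  | Y, X => 3
  | Z, Y => 3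
  | X, Z => 3
  | _, _ => 0

/-- An element of the Pauli n-group: a global phase i^α and a tuple of labels. -/
def PauliEl (n : ℕ) : Type := ZMod 4 × (Fin n → PLbl)

/-- Multiplication in the Pauli n-group. -/
def pmul {n : ℕ} (p q : PauliEl n) : PauliEl n :=
  (p.1 + q.1 + ∑ i, lphase (p.2 i) (q.2 i), fun i => lmul (p.2 i) (q.2 i))


/-- AvN triple, alternative definition: phases ±1, at each site at least two
components agree, and the three pattern-counts N_e, N_f, N_g are all odd. -/
def IsAvNTriple {n : ℕ} (e f g : PauliEl n) : Prop :=
  (e.1 = 0 ∨ e.1 = 2) ∧ (f.1 = 0 ∨ f.1 = 2) ∧ (g.1 = 0 ∨ g.1 = 2) ∧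
  (∀ i, e.2 i = f.2 i ∨ f.2 i = g.2 i ∨ e.2 i = g.2 i) ∧
  Odd (Finset.univ.filter (fun i =>
    f.2 i = g.2 i ∧ f.2 i ≠ e.2 i ∧ e.2 i ≠ I ∧ f.2 i ≠ I ∧ g.2 i ≠ I)).card ∧
  Odd (Finset.univ.filter (fun i =>
    e.2 i = g.2 i ∧ g.2 i ≠ f.2 i ∧ e.2 i ≠ I ∧ f.2 i ≠ I ∧ g.2 i ≠ I)).card ∧
  Odd (Finset.univ.filter (fun i =>
    e.2 i = f.2 i ∧ f.2 i ≠ g.2 i ∧ e.2 i ≠ I ∧ f.2 i ≠ I ∧ g.2 i ≠ I)).card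

/-- Any AvN triple in the Pauli n-group restricts, on three suitable
coordinates, to an AvN triple in the Pauli 3-group. -/
theorem avn_triple_reduces_to_three_qubits {n : ℕ} (e f g : PauliEl n)
    (h : IsAvNTriple e f g) :
    ∃ i₁ i₂ i₃ : Fin n, i₁ ≠ i₂ ∧ i₁ ≠ i₃ ∧ i₂ ≠ i₃ ∧
      (e.2 i₁ = f.2 i₁ ∧ f.2 i₁ ≠ g.2 i₁ ∧ e.2 i₁ ≠ I ∧ f.2 i₁ ≠ I ∧ g.2 i₁ ≠ I) ∧
      (f.2 i₂ = g.2 i₂ ∧ f.2 i₂ ≠ e.2 i₂ ∧ e.2 i₂ ≠ I ∧ f.2 i₂ ≠ I ∧ g.2 i₂ ≠ I) ∧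
      (e.2 i₃ = g.2 i₃ ∧ g.2 i₃ ≠ f.2 i₃ ∧ e.2 i₃ ≠ I ∧ f.2 i₃ ≠ I ∧ g.2 i₃ ≠ I) ∧
      IsAvNTriple (n := 3)
        (e.1, fun t => e.2 (![i₁, i₂, i₃] t))
        (f.1, fun t => f.2 (![i₁, i₂, i₃] t))
        (g.1, fun t => g.2 (![i₁, i₂, i₃] t)) := by
  obtain ⟨he, hf, hg, htwo, hNe, hNf, hNg⟩ := h
  obtain ⟨i₂, hi₂⟩ := Finset.card_pos.mp hNe.pos
  obtain ⟨i₃, hi₃⟩ := Finset.card_pos.mp hNf.pos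
  obtain ⟨i₁, hi₁⟩ := Finset.card_pos.mp hNg.pos
  simp only [Finset.mem_filter, Finset.mem_univ, true_and] at hi₁ hi₂ hi₃
  obtain ⟨h1ef, h1fg, h1e, h1f, h1g⟩ := hi₁
  obtain ⟨h2fg, h2fe, h2e, h2f, h2g⟩ := hi₂
  obtain ⟨h3eg, h3gf, h3e, h3f, h3g⟩ := hi₃
  have d12 : i₁ ≠ i₂ := by rintro rfl; exact h2fe h1ef.symm
  have d13 : i₁ ≠ i₃ := by rintro rfl; exact h1fg (h1ef.symm.trans h3eg)
  have d23 : i₂ ≠ i₃ := by rintro rfl; exact h3gf (h2fg.symm)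
  refine ⟨i₁, i₂, i₃, d12, d13, d23, ⟨h1ef, h1fg, h1e, h1f, h1g⟩,
    ⟨h2fg, h2fe, h2e, h2f, h2g⟩, ⟨h3eg, h3gf, h3e, h3f, h3g⟩,
    he, hf, hg, ?_, ?_, ?_, ?_⟩
  · intro t
    fin_cases t <;> simp_all
  · have : (Finset.univ.filter (fun t : Fin 3 =>
        f.2 (![i₁, i₂, i₃] t) = g.2 (![i₁, i₂, i₃] t) ∧
        f.2 (![i₁, i₂, i₃] t) ≠ e.2 (![i₁, i₂, i₃] t) ∧
        e.2 (![i₁, i₂, i₃] t) ≠ I ∧ f.2 (![i₁, i₂, i₃] t) ≠ I ∧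
        g.2 (![i₁, i₂, i₃] t) ≠ I)) = {1} := by
      ext t
      fin_cases t <;>
        simp_all [Matrix.cons_val_zero, Matrix.cons_val_one]
    simp only [this]
    simp
  · have : (Finset.univ.filter (fun t : Fin 3 =>
        e.2 (![i₁, i₂, i₃] t) = g.2 (![i₁, i₂, i₃] t) ∧
        g.2 (![i₁, i₂, i₃] t) ≠ f.2 (![i₁, i₂, i₃] t) ∧
        e.2 (![i₁, i₂, i₃] t) ≠ I ∧ f.2 (![i₁, i₂, i₃] t) ≠ I ∧
        g.2 (![i₁, i₂, i₃] t) ≠ I)) = {2} := by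
      ext t
      fin_cases t <;>
        simp_all [Matrix.cons_val_zero, Matrix.cons_val_one]
    simp only [this]
    simp
  · have : (Finset.univ.filter (fun t : Fin 3 =>
        e.2 (![i₁, i₂, i₃] t) = f.2 (![i₁, i₂, i₃] t) ∧
        f.2 (![i₁, i₂, i₃] t) ≠ g.2 (![i₁, i₂, i₃] t) ∧
        e.2 (![i₁, i₂, i₃] t) ≠ I ∧ f.2 (![i₁, i₂, i₃] t) ≠ I ∧
        g.2 (![i₁, i₂, i₃] t) ≠ I)) = {0} := by
      ext t
      fin_cases t <;>
        simp_all [Matrix.cons_val_zero, Matrix.cons_val_one]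
    simp only [this]
    simp
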